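/- arXiv:1602.06140 — 3 statements merged into one kernel-verified Lean document; each statement's English description precedes it below -/
import Mathlib

section
/- Let U and V be nonempty sets, m ≥ 1, and let t₀ < t₁ < ⋯ < t_m be real numbers. Let α : (ℝ → V) → (ℝ → U) and β : (ℝ → U) → (ℝ → V) satisfy the following delay property relative to the grid: for every j ∈ {0, …, m−1} and all v, v′ : ℝ → V, if v(s) = v′(s) for all s ∈ [t₀, t_j), then α(v)(s) = α(v′)(s) for all s ∈ [t₀, t_{j+1}); and symmetrically, for every j and all u, u′ : ℝ → U, if u(s) = u′(s) for all s ∈ [t₀, t_j), then β(u)(s) = β(u′)(s) for all s ∈ [t₀, t_{j+1}). Then there exists a pair of functions (u, v) with u(s) = α(v)(s) and v(s) = β(u)(s) for every s ∈ [t₀, t_m); moreover this pair is unique on [t₀, t_m): if (u′, v′) also satisfies u′(s) = α(v′)(s) and v′(s) = β(u′)(s) for all s ∈ [t₀, t_m), then u′(s) = u(s) and v′(s) = v(s) for all s ∈ [t₀, t_m). -/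
/-- Fixed point of a pair of strategies with delay (deterministic, pathwise core of
Lemma 2.8): if `α` and `β` are strategies with delay relative to a grid
`t 0 < t 1 < ⋯ < t m`, then there is a pair of controls `(u, v)` with `u = α v` and
`v = β u` on `[t 0, t m)`, and this pair is unique on `[t 0, t m)`. -/
theorem strategies_with_delay_fixed_point {U V : Type*} [Nonempty U] [Nonempty V]
    (m : ℕ) (hm : 1 ≤ m) (t : ℕ → ℝ) (ht : ∀ j, j < m → t j < t (j + 1))
    (α : (ℝ → V) → (ℝ → U)) (β : (ℝ → U) → (ℝ → V))
    (hα : ∀ j, j < m → ∀ v v' : ℝ → V, (∀ s, t 0 ≤ s → s < t j → v s = v' s) →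
      ∀ s, t 0 ≤ s → s < t (j + 1) → α v s = α v' s)
    (hβ : ∀ j, j < m → ∀ u u' : ℝ → U, (∀ s, t 0 ≤ s → s < t j → u s = u' s) →
      ∀ s, t 0 ≤ s → s < t (j + 1) → β u s = β u' s) :
    ∃ u : ℝ → U, ∃ v : ℝ → V,
      (∀ s, t 0 ≤ s → s < t m → u s = α v s ∧ v s = β u s) ∧
      ∀ u' : ℝ → U, ∀ v' : ℝ → V,
        (∀ s, t 0 ≤ s → s < t m → u' s = α v' s ∧ v' s = β u' s) →
        ∀ s, t 0 ≤ s → s < t m → u' s = u s ∧ v' s = v s := by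
  classical
  -- monotonicity of the grid
  have tmono : ∀ i j : ℕ, i ≤ j → j ≤ m → t i ≤ t j := by
    intro i j hij hjm
    induction hij with
    | refl => exact le_rfl
    | @step k hk ih =>
      exact (ih (by omega)).trans (ht k (by omega)).le
  -- iterate β ∘ α
  set w : ℕ → ℝ → V := fun k => (fun f => β (α f))^[k] (fun _ => Classical.arbitrary V)
    with hwdef
  have hw : ∀ k, w (k + 1) = β (α (w k)) := fun k => Function.iterate_succ_apply' _ _ _
  have P : ∀ j, j ≤ m → ∀ s, t 0 ≤ s → s < t j → w j s = w (j + 1) s := by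
    intro j
    induction j with
    | zero => intro _ s hs hs'; exact absurd hs' (not_lt.2 hs)
    | succ j ih =>
      intro hjm s hs hs'
      have hj : j < m := hjm
      have h1 : ∀ s, t 0 ≤ s → s < t j → α (w j) s = α (w (j + 1)) s := fun s hs hs' =>
        hα j hj _ _ (ih hj.le) s hs (hs'.trans (ht j hj))
      have h2 := hβ j hj _ _ h1 s hs hs'
      rw [hw j, hw (j + 1)]
      exact h2
  obtain ⟨n, rfl⟩ : ∃ n, m = n + 1 := ⟨m - 1, by omega⟩
  set v : ℝ → V := w (n + 1) with hv
  set u : ℝ → U := α v with hu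
  have hn : n < n + 1 := Nat.lt_succ_self n
  have key : ∀ s, t 0 ≤ s → s < t (n + 1) → u s = α v s ∧ v s = β u s := by
    intro s hs hs'
    refine ⟨rfl, ?_⟩
    have h1 : ∀ s, t 0 ≤ s → s < t n → α (w n) s = α (w (n + 1)) s := fun s hs hs' =>
      hα n hn _ _ (P n hn.le) s hs (hs'.trans (ht n hn))
    have h2 := hβ n hn _ _ h1 s hs hs'
    calc v s = β (α (w n)) s := by rw [hv, hw n]
      _ = β (α (w (n + 1))) s := h2
      _ = β u s := rfl
  refine ⟨u, v, key, ?_⟩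
  intro u' v' hsol'
  have Q : ∀ j, j ≤ n + 1 → ∀ s, t 0 ≤ s → s < t j → u' s = u s ∧ v' s = v s := by
    intro j
    induction j with
    | zero => intro _ s hs hs'; exact absurd hs' (not_lt.2 hs)
    | succ j ih =>
      intro hjm s hs hs'
      have hj : j < n + 1 := hjm
      have hsm : s < t (n + 1) := lt_of_lt_of_le hs' (tmono (j + 1) (n + 1) hjm le_rfl)
      have ihv : ∀ s, t 0 ≤ s → s < t j → v' s = v s := fun s hs hs' => (ih hj.le s hs hs').2
      have ihu : ∀ s, t 0 ≤ s → s < t j → u' s = u s := fun s hs hs' => (ih hj.le s hs hs').1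
      constructor
      · calc u' s = α v' s := (hsol' s hs hsm).1
          _ = α v s := hα j hj _ _ ihv s hs hs'
          _ = u s := ((key s hs hsm).1).symm
      · calc v' s = β u' s := (hsol' s hs hsm).2
          _ = β u s := hβ j hj _ _ ihu s hs hs'
          _ = v s := ((key s hs hsm).2).symm
  exact Q (n + 1) le_rfl
end

section
/- Let I be a nonempty finite set, let p, p̄ ∈ Δ(I), and let ξ, ξ̄ ∈ ℝ^I satisfy ∑_{i∈I} ξ_i = ∑_{i∈I} ξ̄_i. Let I₁ = {i ∈ I : p_i > 0 and p̄_i > 0} and assume I₁ is nonempty. Suppose the quantity ξ_i − ξ̄_i − (p_i − p̄_i) takes the same value for all i ∈ I₁ (i.e., there is c ∈ ℝ with ξ_i − ξ̄_i − (p_i − p̄_i) = c for every i ∈ I₁). Then for every i ∈ I₁, |ξ_i − ξ̄_i| ≤ 2·‖p − p̄‖ + (1/|I₁|) ∑_{i′ ∈ I∖I₁} |ξ_{i′} − ξ̄_{i′}|, where ‖·‖ denotes the Euclidean norm on ℝ^I. -/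
/-- Key deterministic inequality in the proof of Lipschitz continuity in `p`
(Proposition 3.3): if `∑ ξ = ∑ ξ̄`, `I₁` is the common support of `p, p̄ ∈ Δ(I)`,
and `ξ i - ξ̄ i - (p i - p̄ i)` is constant on `I₁`, then for every `i ∈ I₁`,
`|ξ i - ξ̄ i| ≤ 2‖p - p̄‖ + (1/|I₁|) ∑_{i' ∉ I₁} |ξ i' - ξ̄ i'|`,
where `‖·‖` is the Euclidean norm. -/
theorem key_inequality_lipschitz_in_p {I : Type*} [Fintype I] [DecidableEq I] [Nonempty I]
    (p pbar : I → ℝ) (hp : p ∈ stdSimplex ℝ I) (hpbar : pbar ∈ stdSimplex ℝ I)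
    (ξ ξbar : I → ℝ) (hsum : ∑ i, ξ i = ∑ i, ξbar i)
    (I₁ : Finset I) (hI₁ : I₁ = Finset.univ.filter fun i => 0 < p i ∧ 0 < pbar i)
    (hne : I₁.Nonempty)
    (c : ℝ) (hc : ∀ i ∈ I₁, ξ i - ξbar i - (p i - pbar i) = c) :
    ∀ i ∈ I₁, |ξ i - ξbar i|
      ≤ 2 * Real.sqrt (∑ i', (p i' - pbar i') ^ 2)
        + (1 / (I₁.card : ℝ)) * ∑ i' ∈ I₁ᶜ, |ξ i' - ξbar i'| := by
  intro i hi
  set S : ℝ := Real.sqrt (∑ i', (p i' - pbar i') ^ 2) with hS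
  have hSnn : 0 ≤ S := Real.sqrt_nonneg _
  have hnpos : (0 : ℝ) < (I₁.card : ℝ) := by exact_mod_cast hne.card_pos
  have habs : ∀ j, |p j - pbar j| ≤ S := by
    intro j
    apply Real.abs_le_sqrt
    exact Finset.single_le_sum (f := fun k => (p k - pbar k) ^ 2)
      (fun k _ => sq_nonneg _) (Finset.mem_univ j)
  -- total sums are zero
  have hd0 : ∑ j ∈ I₁, (ξ j - ξbar j) + ∑ j ∈ I₁ᶜ, (ξ j - ξbar j) = 0 := by
    rw [Finset.sum_add_sum_compl, Finset.sum_sub_distrib, hsum]; ring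
  have he0 : ∑ j ∈ I₁, (p j - pbar j) + ∑ j ∈ I₁ᶜ, (p j - pbar j) = 0 := by
    rw [Finset.sum_add_sum_compl, Finset.sum_sub_distrib, hp.2, hpbar.2]; ring
  -- value of n * c
  have hnc : (I₁.card : ℝ) * c = ∑ j ∈ I₁, (ξ j - ξbar j) - ∑ j ∈ I₁, (p j - pbar j) := by
    rw [← Finset.sum_sub_distrib, Finset.sum_congr rfl hc, Finset.sum_const,
      nsmul_eq_mul]
  have hesum : |∑ j ∈ I₁, (p j - pbar j)| ≤ (I₁.card : ℝ) * S := by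
    calc |∑ j ∈ I₁, (p j - pbar j)| ≤ ∑ j ∈ I₁, |p j - pbar j| :=
          Finset.abs_sum_le_sum_abs _ _
      _ ≤ ∑ _j ∈ I₁, S := Finset.sum_le_sum fun j _ => habs j
      _ = (I₁.card : ℝ) * S := by rw [Finset.sum_const, nsmul_eq_mul]
  have hdsum : |∑ j ∈ I₁, (ξ j - ξbar j)| ≤ ∑ j ∈ I₁ᶜ, |ξ j - ξbar j| := by
    have : ∑ j ∈ I₁, (ξ j - ξbar j) = -∑ j ∈ I₁ᶜ, (ξ j - ξbar j) := by linarith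
    rw [this, abs_neg]
    exact Finset.abs_sum_le_sum_abs _ _
  have hcbound : |c| ≤ S + (1 / (I₁.card : ℝ)) * ∑ j ∈ I₁ᶜ, |ξ j - ξbar j| := by
    have h1 : (I₁.card : ℝ) * |c| = |(I₁.card : ℝ) * c| := by
      rw [abs_mul, abs_of_pos hnpos]
    have h2 : |(I₁.card : ℝ) * c| ≤ (∑ j ∈ I₁ᶜ, |ξ j - ξbar j|) + (I₁.card : ℝ) * S := by
      rw [hnc]
      calc |∑ j ∈ I₁, (ξ j - ξbar j) - ∑ j ∈ I₁, (p j - pbar j)|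
          ≤ |∑ j ∈ I₁, (ξ j - ξbar j)| + |∑ j ∈ I₁, (p j - pbar j)| := abs_sub _ _
        _ ≤ (∑ j ∈ I₁ᶜ, |ξ j - ξbar j|) + (I₁.card : ℝ) * S := add_le_add hdsum hesum
    have h3 : (I₁.card : ℝ) * |c| ≤ (∑ j ∈ I₁ᶜ, |ξ j - ξbar j|) + (I₁.card : ℝ) * S := by
      rw [h1]; exact h2
    have h4 : |c| ≤ (∑ j ∈ I₁ᶜ, |ξ j - ξbar j| + (I₁.card : ℝ) * S) / (I₁.card : ℝ) :=
      (le_div_iff₀ hnpos).2 (by linarith [h3, mul_comm (|c|) ((I₁.card : ℝ))])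
    have h5 : (∑ j ∈ I₁ᶜ, |ξ j - ξbar j| + (I₁.card : ℝ) * S) / (I₁.card : ℝ)
        = S + (1 / (I₁.card : ℝ)) * ∑ j ∈ I₁ᶜ, |ξ j - ξbar j| := by
      field_simp
      ring
    linarith [h4, h5.le, h5.ge]
  have hi' : ξ i - ξbar i = (p i - pbar i) + c := by
    have := hc i hi; linarith
  calc |ξ i - ξbar i| = |(p i - pbar i) + c| := by rw [hi']
    _ ≤ |p i - pbar i| + |c| := abs_add_le _ _
    _ ≤ S + (S + (1 / (I₁.card : ℝ)) * ∑ j ∈ I₁ᶜ, |ξ j - ξbar j|) :=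
        add_le_add (habs i) hcbound
    _ = 2 * S + (1 / (I₁.card : ℝ)) * ∑ j ∈ I₁ᶜ, |ξ j - ξbar j| := by ring
end

section
/- Let t ∈ ℝ, h > 0, and η ∈ ℝ with t + 2h ≤ η ≤ t + 3h. Let A ⊆ (t + h, η) ∩ ℚ and B ⊆ (t, η) ∩ ℚ be finite sets. Then there exists a strictly increasing continuous bijection ψ from [t + h, η] onto [t, η] with ψ(t + h) = t and ψ(η) = η, such that: (i) ψ(x) ∈ ℚ for every x ∈ A; (ii) ψ⁻¹(y) ∈ ℚ for every y ∈ B; and (iii) for all r, s ∈ [t + h, η], |r − s| ≤ |ψ(r) − ψ(s)| ≤ 3·|r − s|. -/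
/-!
The affine map `x ↦ c + σ x` of `[t+h, η]` onto `[t, η]` has slope `σ = (η-t)/(η-t-h) ∈ [3/2, 2]`.
Move each point of `A` and each affine preimage of a point of `B` to a nearby rational node
(rational points stay put) and prescribe there a nearby rational value (rational values stay put).
The corrections to the affine map are small compared with the spacing of the nodes, hence form
`1/2`-Lipschitz data; extending them (McShane) to a `1/2`-Lipschitz `e` vanishing at the endpoints,
`ψ x = c + σ x + e x` has all difference quotients in `[σ - 1/2, σ + 1/2] ⊆ [1, 5/2]`.
-/

open Set
open scoped NNReal

theorem exists_lipschitzWith_comp_eq {α ι : Type*} [PseudoMetricSpace α] {K : ℝ≥0}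
    (p : ι → α) (v : ι → ℝ) (h : ∀ i j, dist (v i) (v j) ≤ K * dist (p i) (p j)) :
    ∃ e : α → ℝ, LipschitzWith K e ∧ e ∘ p = v := by
  have hfac : v.FactorsThrough p := fun i j hij => dist_le_zero.1 (by simpa [hij] using h i j)
  have hlip : LipschitzOnWith K (Function.extend p v 0) (range p) := by
    refine LipschitzOnWith.of_dist_le_mul ?_
    rintro _ ⟨i, rfl⟩ _ ⟨j, rfl⟩
    simpa only [hfac.extend_apply] using h i j
  obtain ⟨e, he, heq⟩ := hlip.extend_real
  exact ⟨e, he, funext fun i => (heq ⟨i, rfl⟩).symm.trans (hfac.extend_apply 0 i)⟩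

theorem Set.Finite.exists_pos_forall_le_dist {α : Type*} [MetricSpace α] {s : Set α}
    (hs : s.Finite) : ∃ δ > 0, ∀ x ∈ s, ∀ y ∈ s, x ≠ y → δ ≤ dist x y := by
  by_cases hnt : s.Nontrivial
  · exact ⟨s.infsep, (hs.infsep_pos_iff_nontrivial).2 hnt,
      fun x hx y hy hxy => infsep_le_dist_of_mem hx hy hxy⟩
  · exact ⟨1, one_pos, fun x hx y hy hxy => absurd (not_nontrivial_iff.1 hnt hx hy) hxy⟩

theorem exists_rat_rounding {ε : ℝ} (hε : 0 < ε) :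
    ∃ r : ℝ → ℚ, (∀ x, |(r x : ℝ) - x| < ε) ∧ ∀ q : ℚ, r q = q := by
  have hround : ∀ x : ℝ, ∃ q : ℚ, |(q : ℝ) - x| < ε ∧ ∀ q' : ℚ, (q' : ℝ) = x → q = q' := by
    intro x
    by_cases hx : ∃ q : ℚ, (q : ℝ) = x
    · obtain ⟨q, rfl⟩ := hx
      exact ⟨q, by simpa using hε, fun q' h => (Rat.cast_injective h).symm⟩
    · obtain ⟨q, hq⟩ := exists_rat_near x hε
      exact ⟨q, by rwa [abs_sub_comm], fun q' h => absurd ⟨q', h⟩ hx⟩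
  choose r hr using hround
  exact ⟨r, fun x => (hr x).1, fun q => (hr q).2 q rfl⟩

theorem exists_lipschitzWith_interpolation_near_line {S : Set ℝ} {p q : ℝ → ℝ} {σ c δ ε : ℝ}
    (hsep : ∀ x ∈ S, ∀ y ∈ S, x ≠ y → δ ≤ |x - y|) (hε : 8 * (1 + |σ|) * ε ≤ δ)
    (hp : ∀ x ∈ S, |p x - x| ≤ ε) (hq : ∀ x ∈ S, |q x - (c + σ * x)| ≤ ε) :
    ∃ e : ℝ → ℝ, LipschitzWith (1 / 2) e ∧ ∀ x ∈ S, c + σ * p x + e (p x) = q x := by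
  set v : ℝ → ℝ := fun x => q x - (c + σ * p x)
  have hv : ∀ x ∈ S, |v x| ≤ (1 + |σ|) * ε := by
    intro x hx
    have hσp : |σ * (p x - x)| ≤ |σ| * ε := by
      rw [abs_mul]; exact mul_le_mul_of_nonneg_left (hp x hx) (abs_nonneg σ)
    calc |v x| = |(q x - (c + σ * x)) - σ * (p x - x)| := by simp only [v]; ring_nf
      _ ≤ |q x - (c + σ * x)| + |σ * (p x - x)| := abs_sub _ _
      _ ≤ (1 + |σ|) * ε := by linarith [hq x hx]
  have hvp : ∀ x ∈ S, ∀ y ∈ S, |v x - v y| ≤ 1 / 2 * |p x - p y| := by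
    intro x hx y hy
    rcases eq_or_ne x y with rfl | hxy
    · simp
    have hε₀ : 0 ≤ ε := (abs_nonneg _).trans (hp x hx)
    have hσε : ε ≤ (1 + |σ|) * ε := le_mul_of_one_le_left hε₀ (by simp)
    have hpp : |x - y| ≤ |x - p x| + (|p x - p y| + |p y - y|) :=
      (abs_sub_le x (p x) y).trans (add_le_add_right (abs_sub_le _ (p y) y) _)
    rw [abs_sub_comm x (p x)] at hpp
    linarith [abs_sub (v x) (v y), hsep x hx y hy hxy, hp x hx, hp y hy, hv x hx, hv y hy]
  obtain ⟨e, he, hev⟩ := exists_lipschitzWith_comp_eq (K := 1 / 2) (fun x : S => p x)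
    (fun x : S => v x) fun x y => by
      simpa only [Real.dist_eq, NNReal.coe_div, NNReal.coe_one, NNReal.coe_ofNat]
        using hvp x x.2 y y.2
  refine ⟨e, he, fun x hx => ?_⟩
  have := congrFun hev ⟨x, hx⟩
  simp only [Function.comp_apply, v] at this
  linarith

theorem exists_lipschitzWith_graph_through_rat (σ c : ℝ) (F Z : Finset ℝ) (hFZ : Disjoint F Z) :
    ∃ e : ℝ → ℝ, LipschitzWith (1 / 2) e ∧ (∀ x ∈ F, e x = 0) ∧
      ∀ z ∈ Z, ∃ p q : ℚ, c + σ * p + e p = q ∧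
        (∀ z' : ℚ, (z' : ℝ) = z → p = z') ∧ (∀ y' : ℚ, (y' : ℝ) = c + σ * z → q = y') := by
  classical
  obtain ⟨δ, hδ, hsep⟩ := (F ∪ Z).finite_toSet.exists_pos_forall_le_dist
  set ε := δ / (8 * (1 + |σ|))
  have hε : 8 * (1 + |σ|) * ε = δ := mul_div_cancel₀ δ (by positivity)
  have hε₀ : 0 < ε := by positivity
  obtain ⟨r, hr, hrq⟩ := exists_rat_rounding hε₀
  set p : ℝ → ℝ := fun x => if x ∈ Z then (r x : ℝ) else x
  set q : ℝ → ℝ := fun x => if x ∈ Z then (r (c + σ * x) : ℝ) else c + σ * x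
  obtain ⟨e, he, hpq⟩ := exists_lipschitzWith_interpolation_near_line (S := ↑(F ∪ Z)) (p := p)
    (q := q) (c := c) (fun x hx y hy hxy => by simpa [Real.dist_eq] using hsep x hx y hy hxy)
    hε.le (fun x _ => by by_cases hx : x ∈ Z <;> simp [p, hx, (hr x).le, hε₀.le])
    (fun x _ => by by_cases hx : x ∈ Z <;> simp [q, hx, (hr _).le, hε₀.le])
  refine ⟨e, he, fun x hx => ?_, fun z hz => ⟨r z, r (c + σ * z), ?_, ?_, ?_⟩⟩
  · have hxZ : x ∉ Z := Finset.disjoint_left.1 hFZ hx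
    simpa [p, q, hxZ] using hpq x (by simp [hx])
  · simpa [p, q, hz] using hpq z (by simp [hz])
  · rintro z' rfl; exact hrq z'
  · intro y' hy'; rw [← hy']; exact hrq y'

section AffinePlusLipschitz

variable {e : ℝ → ℝ} {K : ℝ≥0}

theorem LipschitzWith.abs_sub_affine_add_bounds (he : LipschitzWith K e) (c σ r s : ℝ) :
    (|σ| - K) * |r - s| ≤ |(c + σ * r + e r) - (c + σ * s + e s)| ∧
      |(c + σ * r + e r) - (c + σ * s + e s)| ≤ (|σ| + K) * |r - s| := by
  have hK : |e r - e s| ≤ K * |r - s| := by simpa only [Real.dist_eq] using he.dist_le_mul r s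
  have hsplit : (c + σ * r + e r) - (c + σ * s + e s) = σ * (r - s) + (e r - e s) := by ring
  rw [hsplit]
  constructor
  · have := abs_sub_abs_le_abs_sub (σ * (r - s)) (-(e r - e s))
    rw [sub_neg_eq_add, abs_neg, abs_mul] at this
    linarith
  · have := abs_add_le (σ * (r - s)) (e r - e s)
    rw [abs_mul] at this
    linarith

theorem LipschitzWith.strictMono_affine_add (he : LipschitzWith K e) (c : ℝ) {σ : ℝ}
    (hσ : K < σ) : StrictMono fun x => c + σ * x + e x := by
  intro r s hrs
  have hK : |e s - e r| ≤ K * (s - r) := by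
    simpa only [Real.dist_eq, abs_of_pos (sub_pos.2 hrs)] using he.dist_le_mul s r
  have : (K : ℝ) * (s - r) < σ * (s - r) := mul_lt_mul_of_pos_right hσ (sub_pos.2 hrs)
  linarith [neg_abs_le (e s - e r)]

end AffinePlusLipschitz

theorem StrictMono.bijOn_Icc {α β : Type*} [ConditionallyCompleteLinearOrder α]
    [TopologicalSpace α] [OrderTopology α] [DenselyOrdered α] [LinearOrder β]
    [TopologicalSpace β] [OrderClosedTopology β] {f : α → β} (hf : StrictMono f)
    (hc : Continuous f) {a b : α} (hab : a ≤ b) : BijOn f (Icc a b) (Icc (f a) (f b)) :=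
  ⟨hf.monotone.mapsTo_Icc, hf.injective.injOn,
    hc.continuousOn.surjOn_Icc (left_mem_Icc.2 hab) (right_mem_Icc.2 hab)⟩

theorem exists_affine_time_change {t h η : ℝ} (hh : 0 < h) (hη₁ : t + 2 * h ≤ η)
    (hη₂ : η ≤ t + 3 * h) : ∃ σ c : ℝ, 3 / 2 ≤ σ ∧ σ ≤ 2 ∧ c + σ * (t + h) = t ∧ c + σ * η = η := by
  have hd : 0 < η - t - h := by linarith
  refine ⟨(η - t) / (η - t - h), η - (η - t) / (η - t - h) * η, ?_, ?_, ?_, by ring⟩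
  · rw [le_div_iff₀ hd]; linarith
  · rw [div_le_iff₀ hd]; linarith
  · field_simp; ring

theorem div_sub_mem_Ioo_of_mem_Ioo_affine {σ c a b y : ℝ} (hσ : 0 < σ)
    (hy : y ∈ Ioo (c + σ * a) (c + σ * b)) : (y - c) / σ ∈ Ioo a b := by
  constructor
  · rw [lt_div_iff₀ hσ]; linarith [hy.1]
  · rw [div_lt_iff₀ hσ]; linarith [hy.2]

/-- Existence of the time-change homeomorphism of the proof of Lemma 3.1: a strictly
increasing continuous bijection `ψ : [t+h, η] → [t, η]` with `ψ(t+h) = t`, `ψ(η) = η`,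
mapping the prescribed finite set `A` of rational times to rational times, whose inverse maps
the prescribed finite set `B` of rational times to rational times, and satisfying
`|r - s| ≤ |ψ r - ψ s| ≤ 3 |r - s|`. -/
theorem exists_time_change_homeomorphism (t h η : ℝ) (hh : 0 < h)
    (hη₁ : t + 2 * h ≤ η) (hη₂ : η ≤ t + 3 * h)
    (A B : Finset ℝ)
    (hA : ∀ x ∈ A, x ∈ Set.Ioo (t + h) η ∧ x ∈ Set.range ((↑) : ℚ → ℝ))
    (hB : ∀ y ∈ B, y ∈ Set.Ioo t η ∧ y ∈ Set.range ((↑) : ℚ → ℝ)) :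
    ∃ ψ : ℝ → ℝ,
      StrictMonoOn ψ (Set.Icc (t + h) η) ∧
      ContinuousOn ψ (Set.Icc (t + h) η) ∧
      Set.BijOn ψ (Set.Icc (t + h) η) (Set.Icc t η) ∧
      ψ (t + h) = t ∧ ψ η = η ∧
      (∀ x ∈ A, ψ x ∈ Set.range ((↑) : ℚ → ℝ)) ∧
      (∀ y ∈ B, ∀ x ∈ Set.Icc (t + h) η, ψ x = y → x ∈ Set.range ((↑) : ℚ → ℝ)) ∧
      (∀ r ∈ Set.Icc (t + h) η, ∀ s ∈ Set.Icc (t + h) η,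
        |r - s| ≤ |ψ r - ψ s| ∧ |ψ r - ψ s| ≤ 3 * |r - s|) := by
  obtain ⟨σ, c, hσ₁, hσ₂, hct, hcη⟩ := exists_affine_time_change hh hη₁ hη₂
  set Z := A ∪ B.image fun y => (y - c) / σ
  have hZ : ∀ z ∈ Z, z ∈ Ioo (t + h) η := by
    simp only [Z, Finset.mem_union, Finset.mem_image]
    rintro z (hz | ⟨y, hy, rfl⟩)
    · exact (hA z hz).1
    · exact div_sub_mem_Ioo_of_mem_Ioo_affine (by linarith) (by rw [hct, hcη]; exact (hB y hy).1)
  have hFZ : Disjoint {t + h, η} Z := Finset.disjoint_left.2 fun x hx hxZ => by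
    have := hZ x hxZ
    simp only [Finset.mem_insert, Finset.mem_singleton] at hx
    rcases hx with rfl | rfl <;> simp at this
  obtain ⟨e, he, heF, heZ⟩ := exists_lipschitzWith_graph_through_rat σ c _ Z hFZ
  set ψ : ℝ → ℝ := fun x => c + σ * x + e x
  have hψt : ψ (t + h) = t := by simp [ψ, heF, hct]
  have hψη : ψ η = η := by simp [ψ, heF, hcη]
  have hmono : StrictMono ψ := he.strictMono_affine_add c (by norm_num; linarith)
  have hcont : Continuous ψ := by have := he.continuous; fun_prop
  refine ⟨ψ, hmono.strictMonoOn _, hcont.continuousOn, ?_, hψt, hψη, ?_, ?_, ?_⟩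
  · simpa only [hψt, hψη] using hmono.bijOn_Icc hcont (by linarith : t + h ≤ η)
  · intro x hx
    obtain ⟨q, hq⟩ := (hA x hx).2
    obtain ⟨p, q', hpq, hp, -⟩ := heZ x (Finset.mem_union_left _ hx)
    exact ⟨q', by rw [← hq, ← hp q hq]; exact hpq.symm⟩
  · intro y hy x _ hx
    obtain ⟨q, hq⟩ := (hB y hy).2
    obtain ⟨p, q', hpq, -, hq'⟩ :=
      heZ ((y - c) / σ) (Finset.mem_union_right _ (Finset.mem_image_of_mem _ hy))
    rw [mul_div_cancel₀ _ (by linarith : σ ≠ 0), add_sub_cancel] at hq'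
    exact ⟨p, hmono.injective (hpq.trans (by rw [hq' q hq, hq, hx]))⟩
  · intro r _ s _
    obtain ⟨hlo, hhi⟩ := he.abs_sub_affine_add_bounds c σ r s
    rw [abs_of_pos (by linarith : 0 < σ)] at hlo hhi
    norm_num at hlo hhi
    constructor <;> nlinarith [abs_nonneg (r - s)]
end
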